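/- Let X be a compact Hausdorff space, E an extremally disconnected compact Hausdorff space, and π : E → X a continuous surjection that is irreducible and quasi-open. Then for every extremally disconnected compact Hausdorff space S, the map g ↦ π ∘ g is a bijection from the set of quasi-open continuous maps S → E to the set of quasi-open continuous maps S → X. -/

import Mathlib

/-!
Irreducibility of `π` says that `π ⁻¹' interior (π '' C) ⊆ C` for every closed `C ⊆ E`. If
`π ∘ g` is quasi-open and `K` is a compact neighbourhood, `π '' (g '' K)` has nonempty interior,
so `g '' K` contains the nonempty open set `π ⁻¹' interior ((π ∘ g) '' K)`; this makes `g`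
quasi-open. It also makes `g` determined by `π ∘ g`: if `g₁ s ≠ g₂ s`, take `K` so small that
`g₁ '' K` and `g₂ '' K` are disjoint; both would contain the same nonempty open set.
Surjectivity of postcomposition is Gleason's theorem that extremally disconnected compact
Hausdorff spaces are projective.
-/

open Set Function

universe u v w

def IsQuasiOpenMap {α β : Type*} [TopologicalSpace α] [TopologicalSpace β] (f : α → β) : Prop :=
  ∀ U : Set α, IsOpen U → U.Nonempty → (interior (f '' U)).Nonempty

section QuasiOpen

variable {α β γ : Type*} [TopologicalSpace α] [TopologicalSpace β] [TopologicalSpace γ]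

theorem IsQuasiOpenMap.comp {g : β → γ} {f : α → β} (hg : IsQuasiOpenMap g)
    (hf : IsQuasiOpenMap f) : IsQuasiOpenMap (g ∘ f) := by
  intro U hU hne
  have hsub : g '' interior (f '' U) ⊆ (g ∘ f) '' U := by
    rw [image_comp]
    exact image_mono interior_subset
  exact (hg _ isOpen_interior (hf U hU hne)).mono (interior_mono hsub)

theorem IsQuasiOpenMap.exists_isCompact_subset [LocallyCompactSpace α] {f : α → β}
    (hf : IsQuasiOpenMap f) {U : Set α} (hU : IsOpen U) (hne : U.Nonempty) :
    ∃ K ⊆ U, IsCompact K ∧ (interior (f '' K)).Nonempty := by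
  obtain ⟨x, hx⟩ := hne
  obtain ⟨K, hK, hxK, hKU⟩ := exists_compact_subset hU hx
  refine ⟨K, hKU, hK, ?_⟩
  exact (hf _ isOpen_interior ⟨x, hxK⟩).mono (interior_mono (image_mono interior_subset))

end QuasiOpen

section Irreducible

variable {S E X : Type*} [TopologicalSpace S] [TopologicalSpace E] [TopologicalSpace X]
  {π : E → X}

theorem preimage_interior_image_subset_of_irreducible (hπ : Continuous π)
    (hπs : Surjective π) (hπirr : ∀ C : Set E, IsClosed C → π '' C = univ → C = univ)
    {C : Set E} (hC : IsClosed C) : π ⁻¹' interior (π '' C) ⊆ C := by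
  have hclosed : IsClosed (C ∪ π ⁻¹' (interior (π '' C))ᶜ) :=
    hC.union (isOpen_interior.isClosed_compl.preimage hπ)
  have honto : π '' (C ∪ π ⁻¹' (interior (π '' C))ᶜ) = univ := by
    refine eq_univ_of_forall fun x => ?_
    by_cases hx : x ∈ interior (π '' C)
    · obtain ⟨e, he, rfl⟩ := interior_subset hx
      exact ⟨e, Or.inl he, rfl⟩
    · obtain ⟨e, rfl⟩ := hπs x
      exact ⟨e, Or.inr hx, rfl⟩
  intro e he
  have := (hπirr _ hclosed honto).symm ▸ mem_univ e
  exact this.resolve_right (not_not_intro he)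

theorem preimage_interior_image_comp_subset [T2Space E] (hπ : Continuous π)
    (hπs : Surjective π) (hπirr : ∀ C : Set E, IsClosed C → π '' C = univ → C = univ)
    {g : S → E} (hg : Continuous g) {K : Set S} (hK : IsCompact K) :
    π ⁻¹' interior ((π ∘ g) '' K) ⊆ g '' K := by
  rw [image_comp]
  exact preimage_interior_image_subset_of_irreducible hπ hπs hπirr (hK.image hg).isClosed

theorem isQuasiOpenMap_of_isQuasiOpenMap_comp [LocallyCompactSpace S] [T2Space E]
    (hπ : Continuous π) (hπs : Surjective π)
    (hπirr : ∀ C : Set E, IsClosed C → π '' C = univ → C = univ)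
    {g : S → E} (hg : Continuous g) (hqo : IsQuasiOpenMap (π ∘ g)) : IsQuasiOpenMap g := by
  intro U hU hne
  obtain ⟨K, hKU, hK, x, hx⟩ := hqo.exists_isCompact_subset hU hne
  obtain ⟨e, rfl⟩ := hπs x
  have hsub : π ⁻¹' interior ((π ∘ g) '' K) ⊆ g '' U :=
    (preimage_interior_image_comp_subset hπ hπs hπirr hg hK).trans (image_mono hKU)
  exact ⟨e, interior_maximal hsub (isOpen_interior.preimage hπ) hx⟩

theorem eq_of_comp_eq_of_isQuasiOpenMap [LocallyCompactSpace S] [T2Space E]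
    (hπ : Continuous π) (hπs : Surjective π)
    (hπirr : ∀ C : Set E, IsClosed C → π '' C = univ → C = univ)
    {g₁ g₂ : S → E} (hg₁ : Continuous g₁) (hg₂ : Continuous g₂) (hqo : IsQuasiOpenMap (π ∘ g₁))
    (heq : π ∘ g₁ = π ∘ g₂) : g₁ = g₂ := by
  funext s
  by_contra hne
  obtain ⟨U₁, U₂, hU₁, hU₂, hs₁, hs₂, hdisj⟩ := t2_separation hne
  obtain ⟨K, hKU, hK, x, hx⟩ := hqo.exists_isCompact_subset
    ((hU₁.preimage hg₁).inter (hU₂.preimage hg₂)) ⟨s, hs₁, hs₂⟩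
  obtain ⟨e, rfl⟩ := hπs x
  obtain ⟨t₂, ht₂, he₂⟩ :=
    preimage_interior_image_comp_subset hπ hπs hπirr hg₂ hK (heq ▸ hx : _)
  obtain ⟨t₁, ht₁, rfl⟩ := preimage_interior_image_comp_subset hπ hπs hπirr hg₁ hK hx
  exact hdisj.ne_of_mem (hKU ht₁).1 (hKU ht₂).2 he₂.symm

end Irreducible

theorem ExtremallyDisconnected.exists_continuous_comp_eq {S : Type u} {E : Type v} {X : Type w}
    [TopologicalSpace S] [CompactSpace S] [T2Space S] [ExtremallyDisconnected S]
    [TopologicalSpace E] [CompactSpace E] [T2Space E]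
    [TopologicalSpace X] [CompactSpace X] [T2Space X]
    {π : E → X} (hπ : Continuous π) (hπs : Surjective π) {f : S → X} (hf : Continuous f) :
    ∃ g : S → E, Continuous g ∧ π ∘ g = f := by
  -- `CompactT2.Projective` only quantifies over spaces in the universe of `S`.
  have : ExtremallyDisconnected (ULift.{max v w} S) :=
    extremallyDisconnected_of_homeo Homeomorph.ulift.symm
  have hπs' : Surjective (ULift.map π : ULift.{max u w} E → ULift.{max u v} X) := by
    rintro ⟨x⟩
    obtain ⟨e, rfl⟩ := hπs x
    exact ⟨⟨e⟩, rfl⟩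
  obtain ⟨g, hg, hgf⟩ := CompactT2.ExtremallyDisconnected.projective (A := ULift.{max v w} S)
    (f := ULift.up.{max u v} ∘ f ∘ ULift.down)
    (continuous_uliftUp.comp (hf.comp continuous_uliftDown)) (continuous_uliftMap π hπ) hπs'
  refine ⟨ULift.down ∘ g ∘ ULift.up, continuous_uliftDown.comp (hg.comp continuous_uliftUp), ?_⟩
  funext s
  exact congrArg ULift.down (congrFun hgf (ULift.up s))

theorem bijOn_comp_absolute_general
    {X E : Type*} [TopologicalSpace X] [CompactSpace X] [T2Space X]
    [TopologicalSpace E] [CompactSpace E] [T2Space E]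
    (π : E → X) (hπ : Continuous π) (hπs : Function.Surjective π)
    (hπirr : ∀ C : Set E, IsClosed C → π '' C = Set.univ → C = Set.univ)
    (hπqo : ∀ U : Set E, IsOpen U → U.Nonempty → (interior (π '' U)).Nonempty)
    (S : Type*) [TopologicalSpace S] [CompactSpace S] [T2Space S]
    [ExtremallyDisconnected S] :
    Set.BijOn (fun g : S → E => π ∘ g)
      {g : S → E | Continuous g ∧
        ∀ U : Set S, IsOpen U → U.Nonempty → (interior (g '' U)).Nonempty}
      {h : S → X | Continuous h ∧
        ∀ U : Set S, IsOpen U → U.Nonempty → (interior (h '' U)).Nonempty} := by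
  have hπqo : IsQuasiOpenMap π := hπqo
  refine ⟨fun g ⟨hg, hgqo⟩ => ⟨hπ.comp hg, hπqo.comp hgqo⟩, ?_, ?_⟩
  · rintro g₁ ⟨hg₁, hg₁qo⟩ g₂ ⟨hg₂, -⟩ heq
    exact eq_of_comp_eq_of_isQuasiOpenMap hπ hπs hπirr hg₁ hg₂ (hπqo.comp hg₁qo) heq
  · rintro h ⟨hh, hhqo⟩
    obtain ⟨g, hg, rfl⟩ := ExtremallyDisconnected.exists_continuous_comp_eq hπ hπs hh
    exact ⟨g, ⟨hg, isQuasiOpenMap_of_isQuasiOpenMap_comp hπ hπs hπirr hg hhqo⟩, rfl⟩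

/-- If `π : E → X` is an irreducible quasi-open continuous surjection from an
extremally disconnected compact Hausdorff space to a compact Hausdorff space, then
for every extremally disconnected compact Hausdorff space `S`, postcomposition
with `π` is a bijection between quasi-open continuous maps `S → E` and quasi-open
continuous maps `S → X`. -/
theorem bijOn_comp_absolute
    {X E : Type*} [TopologicalSpace X] [CompactSpace X] [T2Space X]
    [TopologicalSpace E] [CompactSpace E] [T2Space E] [ExtremallyDisconnected E]
    (π : E → X) (hπ : Continuous π) (hπs : Function.Surjective π)
    (hπirr : ∀ C : Set E, IsClosed C → π '' C = Set.univ → C = Set.univ)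
    (hπqo : ∀ U : Set E, IsOpen U → U.Nonempty → (interior (π '' U)).Nonempty)
    (S : Type*) [TopologicalSpace S] [CompactSpace S] [T2Space S]
    [ExtremallyDisconnected S] :
    Set.BijOn (fun g : S → E => π ∘ g)
      {g : S → E | Continuous g ∧
        ∀ U : Set S, IsOpen U → U.Nonempty → (interior (g '' U)).Nonempty}
      {h : S → X | Continuous h ∧
        ∀ U : Set S, IsOpen U → U.Nonempty → (interior (h '' U)).Nonempty} :=
  bijOn_comp_absolute_general π hπ hπs hπirr hπqo S
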